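/- Let n ≥ 1 be an integer, s ∈ (0,1), and let Ω ⊂ ℝⁿ be a nonempty bounded open set whose boundary ∂Ω has Lebesgue measure zero. Let u : ℝⁿ → ℝ be measurable with u|_Ω ∈ L¹(Ω), let ũ be the function equal to u on the closure of Ω and equal to E_u/E_1 on ℝⁿ\Ω̄, and assume moreover that ∬_Q |u(x)−u(y)|²/|x−y|^{n+2s} dx dy < ∞. Then ∬_Q |ũ(x)−ũ(y)|²/|x−y|^{n+2s} dx dy = ∬_Q |u(x)−u(y)|²/|x−y|^{n+2s} dx dy holds if and only if u(x) = E_u(x)/E_1(x) for a.e. x ∈ ℝⁿ\Ω̄, i.e. if and only if u satisfies the nonlocal Neumann condition 𝒩ₛu(x) = 0 for a.e. x ∈ ℝⁿ\Ω̄. -/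

import Mathlib

/-!
Since `ũ = u` on `Ω̄` and `∂Ω` is null, the energy of any `v` with `v = u` on `Ω` is the `Ω × Ω`
part plus `2 ∫_{ℝⁿ∖Ω̄} J(v x, x) dx`, where `J(c, x) = ∫_Ω |c - u y|² / |x - y|^{n+2s} dy`.
Finite energy makes `J(u x, x)` finite at some exterior point, which forces `u ∈ L²(Ω)`. Then
`J(·, x)` is a quadratic polynomial minimised at the weighted mean `E_u(x) / E_1(x) = ũ(x)`:
`J(c, x) = (c - ũ x)² E_1(x) + J(ũ x, x)`. Hence the energy of `u` is that of `ũ` plus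
`2 ∫_{ℝⁿ∖Ω̄} (u - ũ)² E_1`, and since both are finite they agree iff `u = ũ` a.e. outside `Ω̄`.
-/

open MeasureTheory Set
open scoped ENNReal

noncomputable section

abbrev Rn (n : ℕ) : Type := EuclideanSpace ℝ (Fin n)

/-- The cross-shaped region `Q := ℝ²ⁿ \ ((ℝⁿ\Ω)×(ℝⁿ\Ω))`. -/
def QQ {n : ℕ} (Ω : Set (Rn n)) : Set (Rn n × Rn n) := ((Ωᶜ) ×ˢ (Ωᶜ))ᶜ

/-- The Gagliardo-type energy `∬_Q |u(x)-u(y)|²/|x-y|^{n+2s} dx dy`, valued in `[0,∞]`. -/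
def gagEnergy (n : ℕ) (s : ℝ) (Ω : Set (Rn n)) (u : Rn n → ℝ) : ℝ≥0∞ :=
  ∫⁻ p in QQ Ω, ENNReal.ofReal (|u p.1 - u p.2| ^ 2 / ‖p.1 - p.2‖ ^ ((n : ℝ) + 2 * s))

/-- `E_u(x) := ∫_Ω u(z)/|x-z|^{n+2s} dz`. -/
def Efun (n : ℕ) (s : ℝ) (Ω : Set (Rn n)) (u : Rn n → ℝ) (x : Rn n) : ℝ :=
  ∫ z in Ω, u z / ‖x - z‖ ^ ((n : ℝ) + 2 * s)

open Classical in
/-- `ũ`, equal to `u` on the closure of `Ω` and to `E_u/E_1` outside. -/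
def tildeFun (n : ℕ) (s : ℝ) (Ω : Set (Rn n)) (u : Rn n → ℝ) (x : Rn n) : ℝ :=
  if x ∈ closure Ω then u x
  else Efun n s Ω u x / Efun n s Ω (fun _ => 1) x

section Kernel

variable {E : Type*} [NormedAddCommGroup E]

theorem exists_pos_le_norm_sub_of_notMem_closure {Ω : Set E} {x : E} (hx : x ∉ closure Ω) :
    ∃ ε > 0, ∀ y ∈ Ω, ε ≤ ‖x - y‖ := by
  rw [Metric.mem_closure_iff] at hx
  push Not at hx
  simpa only [dist_eq_norm] using hx

theorem MeasureTheory.IntegrableOn.div_rpow_norm_sub [MeasurableSpace E] [OpensMeasurableSpace E]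
    {μ : Measure E} {Ω : Set E} {g : E → ℝ} (hg : IntegrableOn g Ω μ) (hΩ : MeasurableSet Ω)
    {x : E} (hx : x ∉ closure Ω) {p : ℝ} (hp : 0 ≤ p) :
    IntegrableOn (fun y => g y / ‖x - y‖ ^ p) Ω μ := by
  obtain ⟨ε, hε, hεle⟩ := exists_pos_le_norm_sub_of_notMem_closure hx
  simp_rw [div_eq_mul_inv]
  have hK : Continuous fun y => ‖x - y‖ ^ p :=
    (continuous_const.sub continuous_id).norm.rpow_const fun _ => Or.inr hp
  refine hg.mul_bdd (c := (ε ^ p)⁻¹) hK.measurable.inv.aestronglyMeasurable ?_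
  filter_upwards [ae_restrict_mem hΩ] with y hy
  rw [norm_inv, Real.norm_of_nonneg (by positivity)]
  exact inv_anti₀ (by positivity) (Real.rpow_le_rpow hε.le (hεle y hy) hp)

end Kernel

section WeightedVariance

variable {α : Type*} [MeasurableSpace α] {μ : Measure α} {f K : α → ℝ}

theorem integral_sub_sq_div (h1 : Integrable (fun y => 1 / K y) μ)
    (hf : Integrable (fun y => f y / K y) μ) (hf2 : Integrable (fun y => f y ^ 2 / K y) μ)
    (a : ℝ) :
    ∫ y, (a - f y) ^ 2 / K y ∂μ
      = a ^ 2 * ∫ y, 1 / K y ∂μ - 2 * a * ∫ y, f y / K y ∂μ + ∫ y, f y ^ 2 / K y ∂μ := by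
  have hpt : ∀ y, (a - f y) ^ 2 / K y
      = a ^ 2 * (1 / K y) - 2 * a * (f y / K y) + f y ^ 2 / K y := fun y => by ring
  have h12 : Integrable (fun y => a ^ 2 * (1 / K y) - 2 * a * (f y / K y)) μ :=
    (h1.const_mul _).sub (hf.const_mul _)
  simp_rw [hpt]
  rw [integral_add h12 hf2,
    integral_sub (h1.const_mul _) (hf.const_mul _), integral_const_mul, integral_const_mul]

/-- Bias–variance identity: `m` is the `1 / K`-weighted mean of `f`. -/
theorem integral_sub_sq_div_eq_add (h1 : Integrable (fun y => 1 / K y) μ)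
    (hf : Integrable (fun y => f y / K y) μ) (hf2 : Integrable (fun y => f y ^ 2 / K y) μ)
    {m : ℝ} (hm : m * ∫ y, 1 / K y ∂μ = ∫ y, f y / K y ∂μ) (c : ℝ) :
    ∫ y, (c - f y) ^ 2 / K y ∂μ = (c - m) ^ 2 * ∫ y, 1 / K y ∂μ + ∫ y, (m - f y) ^ 2 / K y ∂μ := by
  rw [integral_sub_sq_div h1 hf hf2, integral_sub_sq_div h1 hf hf2]
  linear_combination (2 * c - 2 * m) * hm

theorem lintegral_ofReal_sub_sq_mul_eq_zero_iff {f g w : α → ℝ} (hf : AEMeasurable f μ)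
    (hg : AEMeasurable g μ) (hw : AEMeasurable w μ) (hpos : ∀ᵐ x ∂μ, 0 < w x) :
    ∫⁻ x, ENNReal.ofReal ((f x - g x) ^ 2 * w x) ∂μ = 0 ↔ ∀ᵐ x ∂μ, f x = g x := by
  have hmeas : AEMeasurable (fun x => ENNReal.ofReal ((f x - g x) ^ 2 * w x)) μ :=
    ENNReal.measurable_ofReal.comp_aemeasurable (((hf.sub hg).pow_const 2).mul hw)
  rw [lintegral_eq_zero_iff' hmeas]
  constructor
  · intro h
    filter_upwards [h, hpos] with x hx hwx
    have hsq : (f x - g x) ^ 2 ≤ 0 :=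
      nonpos_of_mul_nonpos_left (ENNReal.ofReal_eq_zero.1 hx) hwx
    exact sub_eq_zero.1 (pow_eq_zero_iff two_ne_zero |>.1 (le_antisymm hsq (sq_nonneg _)))
  · intro h
    filter_upwards [h] with x hx
    simp [hx]

end WeightedVariance

theorem add_two_mul_eq_add_two_mul_add_iff {a b c : ℝ≥0∞} (h : a + 2 * (b + c) ≠ ∞) :
    a + 2 * c = a + 2 * (b + c) ↔ b = 0 := by
  have ha : a ≠ ∞ := (ENNReal.add_ne_top.1 h).1
  have hc : 2 * c ≠ ∞ := by
    refine ne_top_of_le_ne_top (ENNReal.add_ne_top.1 h).2 ?_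
    gcongr
    exact le_add_self
  rw [ENNReal.add_right_inj ha, mul_add, eq_comm]
  have hcancel := ENNReal.add_left_inj hc (b := 2 * b) (c := 0)
  rw [zero_add] at hcancel
  simp [hcancel]

theorem setLIntegral_compl_prod_compl_compl {α : Type*} [MeasurableSpace α] {μ : Measure α}
    [SFinite μ] {A : Set α} (hA : MeasurableSet A) {f : α × α → ℝ≥0∞} (hf : Measurable f)
    (hsymm : ∀ q, f q.swap = f q) :
    ∫⁻ q in (Aᶜ ×ˢ Aᶜ)ᶜ, f q ∂μ.prod μ
      = ∫⁻ q in A ×ˢ A, f q ∂μ.prod μ + 2 * ∫⁻ x in Aᶜ, ∫⁻ y in A, f (x, y) ∂μ ∂μ := by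
  have hsplit : (Aᶜ ×ˢ Aᶜ)ᶜ = A ×ˢ A ∪ (A ×ˢ Aᶜ ∪ Aᶜ ×ˢ A) := by
    ext ⟨x, y⟩
    simp only [mem_compl_iff, mem_prod, mem_union]
    tauto
  have hdisj₁ : Disjoint (A ×ˢ A) (A ×ˢ Aᶜ ∪ Aᶜ ×ˢ A) := by
    simp only [disjoint_union_right, disjoint_prod, disjoint_compl_right, true_or, or_true,
      and_self]
  have hdisj₂ : Disjoint (A ×ˢ Aᶜ) (Aᶜ ×ˢ A) := by
    simp only [disjoint_prod, disjoint_compl_right, true_or]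
  have hswap : ∫⁻ q in A ×ˢ Aᶜ, f q ∂μ.prod μ = ∫⁻ q in Aᶜ ×ˢ A, f q ∂μ.prod μ := by
    rw [← Measure.prod_restrict, ← Measure.prod_restrict, ← lintegral_prod_swap]
    simp only [hsymm]
  rw [hsplit, lintegral_union ((hA.prod hA.compl).union (hA.compl.prod hA)) hdisj₁,
    lintegral_union (hA.compl.prod hA) hdisj₂, hswap, ← two_mul, ← Measure.prod_restrict Aᶜ A,
    lintegral_prod _ hf.aemeasurable]

section

variable {n : ℕ} {s : ℝ} {Ω : Set (Rn n)}

def interactionEnergy (n : ℕ) (s : ℝ) (Ω : Set (Rn n)) (u : Rn n → ℝ) (c : ℝ) (x : Rn n) :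
    ℝ≥0∞ :=
  ∫⁻ y in Ω, ENNReal.ofReal (|c - u y| ^ 2 / ‖x - y‖ ^ ((n : ℝ) + 2 * s))

theorem measurable_gagEnergy_integrand {v w : Rn n → ℝ} (hv : Measurable v) (hw : Measurable w) :
    Measurable fun q : Rn n × Rn n =>
      ENNReal.ofReal (|v q.1 - w q.2| ^ 2 / ‖q.1 - q.2‖ ^ ((n : ℝ) + 2 * s)) :=
  ENNReal.measurable_ofReal.comp <|
    (((hv.comp measurable_fst).sub (hw.comp measurable_snd)).abs.pow_const 2).div
      ((measurable_fst.sub measurable_snd).norm.pow_const _)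

theorem measurable_interactionEnergy {u v : Rn n → ℝ} (hu : Measurable u) (hv : Measurable v) :
    Measurable fun x => interactionEnergy n s Ω u (v x) x :=
  (measurable_gagEnergy_integrand hv hu).lintegral_prod_right'

theorem measurable_Efun {w : Rn n → ℝ} (hw : Measurable w) : Measurable (Efun n s Ω w) := by
  have h : StronglyMeasurable fun q : Rn n × Rn n => w q.2 / ‖q.1 - q.2‖ ^ ((n : ℝ) + 2 * s) :=
    ((hw.comp measurable_snd).div
      ((measurable_fst.sub measurable_snd).norm.pow_const _)).stronglyMeasurable
  exact h.integral_prod_right'.measurable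

theorem measurable_tildeFun {u : Rn n → ℝ} (hu : Measurable u) :
    Measurable (tildeFun n s Ω u) :=
  Measurable.ite isClosed_closure.measurableSet hu
    ((measurable_Efun hu).div (measurable_Efun measurable_const))

theorem gagEnergy_eq_add_interactionEnergy (hΩ : MeasurableSet Ω)
    (hfr : volume (frontier Ω) = 0) {u v : Rn n → ℝ} (hv : Measurable v)
    (hvu : EqOn v u Ω) :
    gagEnergy n s Ω v
      = (∫⁻ q in Ω ×ˢ Ω, ENNReal.ofReal (|u q.1 - u q.2| ^ 2 / ‖q.1 - q.2‖ ^ ((n : ℝ) + 2 * s)))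
        + 2 * ∫⁻ x in (closure Ω)ᶜ, interactionEnergy n s Ω u (v x) x := by
  rw [gagEnergy, QQ, Measure.volume_eq_prod, setLIntegral_compl_prod_compl_compl hΩ
    (measurable_gagEnergy_integrand hv hv) fun q => by simp only [Prod.fst_swap, Prod.snd_swap,
      abs_sub_comm, norm_sub_rev]]
  congr 1
  · refine setLIntegral_congr_fun (hΩ.prod hΩ) fun q hq => ?_
    simp only [hvu hq.1, hvu hq.2]
  · congr 1
    rw [Measure.restrict_congr_set (closure_ae_eq_of_null_frontier hfr).compl.symm]
    refine lintegral_congr fun x => setLIntegral_congr_fun hΩ fun y hy => ?_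
    simp only [hvu hy]

theorem Efun_one_pos (hs : 0 ≤ s) (hΩne : Ω.Nonempty) (hΩo : IsOpen Ω)
    (hΩb : Bornology.IsBounded Ω) {x : Rn n} (hx : x ∉ closure Ω) :
    0 < Efun n s Ω (fun _ => 1) x := by
  have hpos : ∀ y ∈ Ω, 0 < 1 / ‖x - y‖ ^ ((n : ℝ) + 2 * s) := fun y hy =>
    one_div_pos.2 <| Real.rpow_pos_of_pos
      (norm_pos_iff.2 (sub_ne_zero.2 (ne_of_mem_of_not_mem (subset_closure hy) hx).symm)) _
  have hint : IntegrableOn (fun y => 1 / ‖x - y‖ ^ ((n : ℝ) + 2 * s)) Ω :=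
    (integrableOn_const hΩb.measure_lt_top.ne).div_rpow_norm_sub hΩo.measurableSet hx
      (by positivity)
  rw [Efun, setIntegral_pos_iff_support_of_nonneg_ae
    (ae_restrict_of_forall_mem hΩo.measurableSet fun y hy => (hpos y hy).le) hint,
    inter_eq_right.2 (show Ω ⊆ Function.support _ from fun y hy => (hpos y hy).ne')]
  exact hΩo.measure_pos volume hΩne

theorem memLp_two_of_interactionEnergy_ne_top (hs : 0 ≤ s) (hΩ : MeasurableSet Ω)
    (hΩb : Bornology.IsBounded Ω) {u : Rn n → ℝ} (hu : Measurable u) {c : ℝ} {x : Rn n}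
    (hx : x ∉ Ω) (hfin : interactionEnergy n s Ω u c x ≠ ∞) :
    MemLp u 2 (volume.restrict Ω) := by
  have hp : 0 ≤ (n : ℝ) + 2 * s := by positivity
  obtain ⟨R, hR⟩ := hΩb.subset_closedBall x
  have hbound : ∫⁻ y in Ω, ENNReal.ofReal ((c - u y) ^ 2)
      ≤ ENNReal.ofReal (R ^ ((n : ℝ) + 2 * s)) * interactionEnergy n s Ω u c x := by
    rw [interactionEnergy, ← lintegral_const_mul' _ _ ENNReal.ofReal_ne_top]
    refine setLIntegral_mono' hΩ fun y hy => ?_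
    have hK : 0 < ‖x - y‖ ^ ((n : ℝ) + 2 * s) :=
      Real.rpow_pos_of_pos (norm_pos_iff.2 (sub_ne_zero.2 (ne_of_mem_of_not_mem hy hx).symm)) _
    have hKR : ‖x - y‖ ^ ((n : ℝ) + 2 * s) ≤ R ^ ((n : ℝ) + 2 * s) := by
      refine Real.rpow_le_rpow (norm_nonneg _) ?_ hp
      simpa [dist_eq_norm, norm_sub_rev] using hR hy
    rw [← ENNReal.ofReal_mul (hK.le.trans hKR), sq_abs]
    refine ENNReal.ofReal_le_ofReal ?_
    calc (c - u y) ^ 2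
        = ‖x - y‖ ^ ((n : ℝ) + 2 * s) * ((c - u y) ^ 2 / ‖x - y‖ ^ ((n : ℝ) + 2 * s)) := by
          field_simp
      _ ≤ R ^ ((n : ℝ) + 2 * s) * ((c - u y) ^ 2 / ‖x - y‖ ^ ((n : ℝ) + 2 * s)) := by
          gcongr
  have hsub : MemLp (fun y => c - u y) 2 (volume.restrict Ω) := by
    have hm : AEStronglyMeasurable (fun y => c - u y) (volume.restrict Ω) :=
      (measurable_const.sub hu).aestronglyMeasurable
    refine (memLp_two_iff_integrable_sq hm).2 ?_
    refine (lintegral_ofReal_ne_top_iff_integrable (hm.pow 2)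
      (ae_of_all _ fun y => sq_nonneg _)).1 ?_
    exact ne_top_of_le_ne_top (ENNReal.mul_ne_top ENNReal.ofReal_ne_top hfin) hbound
  have : IsFiniteMeasure (volume.restrict Ω) := isFiniteMeasure_restrict.2 hΩb.measure_lt_top.ne
  convert (memLp_const c).sub hsub using 1
  funext y
  simp

theorem interactionEnergy_eq_add (hs : 0 ≤ s) (hΩne : Ω.Nonempty) (hΩo : IsOpen Ω)
    (hΩb : Bornology.IsBounded Ω) {u : Rn n → ℝ} (hu : MemLp u 2 (volume.restrict Ω))
    {x : Rn n} (hx : x ∉ closure Ω) (c : ℝ) :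
    interactionEnergy n s Ω u c x
      = ENNReal.ofReal ((c - Efun n s Ω u x / Efun n s Ω (fun _ => 1) x) ^ 2
          * Efun n s Ω (fun _ => 1) x)
        + interactionEnergy n s Ω u (Efun n s Ω u x / Efun n s Ω (fun _ => 1) x) x := by
  have hp : 0 ≤ (n : ℝ) + 2 * s := by positivity
  have : IsFiniteMeasure (volume.restrict Ω) := isFiniteMeasure_restrict.2 hΩb.measure_lt_top.ne
  have hK {g : Rn n → ℝ} (hg : IntegrableOn g Ω) :
      IntegrableOn (fun y => g y / ‖x - y‖ ^ ((n : ℝ) + 2 * s)) Ω :=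
    hg.div_rpow_norm_sub hΩo.measurableSet hx hp
  have hofReal (a : ℝ) : interactionEnergy n s Ω u a x
      = ENNReal.ofReal (∫ y in Ω, (a - u y) ^ 2 / ‖x - y‖ ^ ((n : ℝ) + 2 * s)) := by
    have hint : IntegrableOn (fun y => (a - u y) ^ 2) Ω := ((memLp_const a).sub hu).integrable_sq
    rw [ofReal_integral_eq_lintegral_ofReal (hK hint) (ae_of_all _ fun y => by positivity),
      interactionEnergy]
    simp only [sq_abs]
  have hm : Efun n s Ω u x / Efun n s Ω (fun _ => 1) x
      * ∫ y in Ω, 1 / ‖x - y‖ ^ ((n : ℝ) + 2 * s) = ∫ y in Ω, u y / ‖x - y‖ ^ ((n : ℝ) + 2 * s) :=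
    div_mul_cancel₀ _ (Efun_one_pos hs hΩne hΩo hΩb hx).ne'
  rw [hofReal, hofReal,
    integral_sub_sq_div_eq_add (hK (integrableOn_const hΩb.measure_lt_top.ne))
      (hK (hu.integrable one_le_two)) (hK hu.integrable_sq) hm c,
    ENNReal.ofReal_add (by positivity) (integral_nonneg fun y => by positivity)]
  rfl

theorem ae_interactionEnergy_eq_add_tildeFun (hs : 0 ≤ s) (hΩne : Ω.Nonempty) (hΩo : IsOpen Ω)
    (hΩb : Bornology.IsBounded Ω) {u : Rn n → ℝ} (hu : Measurable u)
    (hfin : ∫⁻ x in (closure Ω)ᶜ, interactionEnergy n s Ω u (u x) x ≠ ∞) :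
    ∀ᵐ x ∂volume.restrict (closure Ω)ᶜ, interactionEnergy n s Ω u (u x) x
      = ENNReal.ofReal ((u x - Efun n s Ω u x / Efun n s Ω (fun _ => 1) x) ^ 2
          * Efun n s Ω (fun _ => 1) x)
        + interactionEnergy n s Ω u (tildeFun n s Ω u x) x := by
  have hC : MeasurableSet (closure Ω)ᶜ := isClosed_closure.isOpen_compl.measurableSet
  rcases eq_or_ne (volume.restrict (closure Ω)ᶜ) 0 with h0 | h0
  · simp [h0]
  have : (ae (volume.restrict (closure Ω)ᶜ)).NeBot := ae_neBot.2 h0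
  obtain ⟨x₀, hx₀fin, hx₀⟩ :=
    ((ae_lt_top (measurable_interactionEnergy hu hu) hfin).and (ae_restrict_mem hC)).exists
  have hL2 := memLp_two_of_interactionEnergy_ne_top hs hΩo.measurableSet hΩb hu
    (fun h => hx₀ (subset_closure h)) hx₀fin.ne
  filter_upwards [ae_restrict_mem hC] with x hx
  rw [tildeFun, if_neg hx]
  exact interactionEnergy_eq_add hs hΩne hΩo hΩb hL2 hx (u x)

end

theorem statement1_general {n : ℕ} {s : ℝ} (hs0 : 0 < s)
    {Ω : Set (Rn n)} (hΩne : Ω.Nonempty) (hΩo : IsOpen Ω)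
    (hΩb : Bornology.IsBounded Ω) (hfr : volume (frontier Ω) = 0)
    {u : Rn n → ℝ} (hu : Measurable u)
    (hfin : gagEnergy n s Ω u ≠ ∞) :
    gagEnergy n s Ω (tildeFun n s Ω u) = gagEnergy n s Ω u ↔
      ∀ᵐ x ∂volume.restrict (closure Ω)ᶜ,
        u x = Efun n s Ω u x / Efun n s Ω (fun _ => 1) x := by
  have hC : MeasurableSet (closure Ω)ᶜ := isClosed_closure.isOpen_compl.measurableSet
  have hE1 : Measurable (Efun n s Ω fun _ => 1) := measurable_Efun measurable_const
  have hm : Measurable fun x => Efun n s Ω u x / Efun n s Ω (fun _ => 1) x :=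
    (measurable_Efun hu).div hE1
  rw [gagEnergy_eq_add_interactionEnergy hΩo.measurableSet hfr hu fun _ _ => rfl] at hfin ⊢
  rw [gagEnergy_eq_add_interactionEnergy hΩo.measurableSet hfr (measurable_tildeFun hu)
    fun y hy => if_pos (subset_closure hy)]
  have hdec := ae_interactionEnergy_eq_add_tildeFun hs0.le hΩne hΩo hΩb hu
    (ENNReal.lt_top_of_mul_ne_top_right (ENNReal.add_ne_top.1 hfin).2 two_ne_zero).ne
  have hgap : Measurable fun x => ENNReal.ofReal
      ((u x - Efun n s Ω u x / Efun n s Ω (fun _ => 1) x) ^ 2 * Efun n s Ω (fun _ => 1) x) :=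
    ENNReal.measurable_ofReal.comp (((hu.sub hm).pow_const 2).mul hE1)
  rw [lintegral_congr_ae hdec, lintegral_add_left hgap] at hfin ⊢
  rw [add_two_mul_eq_add_two_mul_add_iff hfin, lintegral_ofReal_sub_sq_mul_eq_zero_iff
    hu.aemeasurable hm.aemeasurable hE1.aemeasurable
    (ae_restrict_of_forall_mem hC fun x hx => Efun_one_pos hs0.le hΩne hΩo hΩb hx)]

/-- equality of the Gagliardo energies of `u` and `ũ` holds if and only if
`u = E_u/E_1` a.e. outside the closure of `Ω`, i.e. iff `u` satisfies the nonlocal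
Neumann condition `𝒩ₛu = 0` a.e. in `ℝⁿ \ Ω̄`. -/
theorem statement1 {n : ℕ} (hn : 1 ≤ n) {s : ℝ} (hs0 : 0 < s) (hs1 : s < 1)
    {Ω : Set (Rn n)} (hΩne : Ω.Nonempty) (hΩo : IsOpen Ω)
    (hΩb : Bornology.IsBounded Ω) (hfr : volume (frontier Ω) = 0)
    {u : Rn n → ℝ} (hu : Measurable u) (hui : IntegrableOn u Ω)
    (hfin : gagEnergy n s Ω u ≠ ∞) :
    gagEnergy n s Ω (tildeFun n s Ω u) = gagEnergy n s Ω u ↔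
      ∀ᵐ x ∂volume.restrict (closure Ω)ᶜ,
        u x = Efun n s Ω u x / Efun n s Ω (fun _ => 1) x :=
  statement1_general hs0 hΩne hΩo hΩb hfr hu hfin
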